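/- Let R be a commutative Noetherian ring, α ∈ R, and Q an injective R-module. Then Q = αQ + Γ_{(α)}Q, where Γ_{(α)}Q is the α-power torsion submodule; consequently the localization map Q → Q[1/α] is surjective. -/
import Mathlib


/-- For an injective module `Q` over a commutative Noetherian ring `R` and `α ∈ R`, we have
`Q = αQ + Γ_{(α)}Q`; consequently the localization map `Q → Q[1/α]` is surjective. -/
theorem stmt5 (R : Type) [CommRing R] [IsNoetherianRing R] (α : R)
    (Q : Type) [AddCommGroup Q] [Module R Q] [Module.Injective R Q] :
    (∀ q : Q, ∃ q' t : Q, (∃ k : ℕ, α ^ k • t = 0) ∧ q = α • q' + t) ∧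
    Function.Surjective (LocalizedModule.mkLinearMap (Submonoid.powers α) Q) := by
  classical
  -- the chain of annihilators stabilizes
  obtain ⟨r, hr⟩ := monotone_stabilizes_iff_noetherian.mpr (inferInstance : IsNoetherian R R)
    ⟨fun n => LinearMap.ker (LinearMap.toSpanSingleton R R (α ^ n)), by
      intro n m hnm x hx
      simp only [LinearMap.mem_ker, LinearMap.toSpanSingleton_apply, smul_eq_mul] at hx ⊢
      obtain ⟨d, rfl⟩ := Nat.exists_eq_add_of_le hnm
      rw [pow_add, ← mul_assoc, hx, zero_mul]⟩
  have key : ∀ q : Q, ∃ q' t : Q, (∃ k : ℕ, α ^ k • t = 0) ∧ q = α • q' + t := by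
    intro q
    set I : Ideal R := Ideal.span {α ^ r} with hI
    let i : R →ₗ[R] (R × (R ⧸ I)) := (LinearMap.toSpanSingleton R R α).prod I.mkQ
    have hi : Function.Injective i := by
      rw [injective_iff_map_eq_zero]
      intro z hz
      have h1 : z * α = 0 := by
        have := congrArg Prod.fst hz
        simpa [i, smul_eq_mul] using this
      have h2 : z ∈ I := by
        have := congrArg Prod.snd hz
        have h' : Ideal.Quotient.mk I z = 0 := by simpa [i] using this
        exact Ideal.Quotient.eq_zero_iff_mem.mp h'
      obtain ⟨y, hy⟩ := Ideal.mem_span_singleton'.mp h2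
      have hy1 : y * α ^ (r + 1) = 0 := by
        rw [pow_succ, ← mul_assoc, hy, h1]
      have heq : LinearMap.ker (LinearMap.toSpanSingleton R R (α ^ r)) =
          LinearMap.ker (LinearMap.toSpanSingleton R R (α ^ (r + 1))) :=
        hr (r + 1) (Nat.le_succ r)
      have hy2 : y * α ^ r = 0 := by
        have hmem : y ∈ LinearMap.ker (LinearMap.toSpanSingleton R R (α ^ (r + 1))) := by
          simpa [LinearMap.mem_ker, smul_eq_mul] using hy1
        rw [← heq] at hmem
        simpa [LinearMap.mem_ker, smul_eq_mul] using hmem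
      rw [← hy, hy2]
    obtain ⟨h, hh⟩ := Module.Injective.out i hi (LinearMap.toSpanSingleton R Q q)
    refine ⟨h (1, 0), h (0, I.mkQ 1), ⟨r, ?_⟩, ?_⟩
    · have hz : (α ^ r) • (((0 : R), I.mkQ 1) : R × R ⧸ I) = 0 := by
        refine Prod.ext (by simp) ?_
        show (α ^ r) • I.mkQ 1 = 0
        rw [← map_smul, smul_eq_mul, mul_one]
        exact (Submodule.Quotient.mk_eq_zero I).mpr (Ideal.subset_span rfl)
      rw [← map_smul, hz, map_zero]
    · have h1 := hh 1
      have hsplit : i 1 = α • (((1 : R), (0 : R ⧸ I)) : R × R ⧸ I) + ((0 : R), I.mkQ 1) := by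
        simp [i, Prod.ext_iff, smul_eq_mul]
      rw [hsplit, map_add, map_smul] at h1
      simpa using h1.symm
  refine ⟨key, ?_⟩
  intro p
  induction p using LocalizedModule.induction_on with
  | h q s =>
    obtain ⟨k, hk⟩ := s.2
    suffices H : ∀ (k : ℕ) (q : Q) (s : Submonoid.powers α), α ^ k = (s : R) →
        ∃ q'', LocalizedModule.mk q'' 1 = LocalizedModule.mk q s by
      obtain ⟨q'', hq''⟩ := H k q s hk
      exact ⟨q'', by rw [LocalizedModule.mkLinearMap_apply, hq'']⟩
    clear hk k q s
    intro k
    induction k with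
    | zero =>
      intro q s hs
      refine ⟨q, LocalizedModule.mk_eq.mpr ⟨1, ?_⟩⟩
      have h1 : (s : R) = 1 := by rw [← hs, pow_zero]
      simp [Submonoid.smul_def, h1]
    | succ k ih =>
      intro q s hs
      obtain ⟨q', t, ⟨m, hm⟩, hq⟩ := key q
      have step : LocalizedModule.mk q s = LocalizedModule.mk q' (⟨α ^ k, k, rfl⟩ : Submonoid.powers α) := by
        apply LocalizedModule.mk_eq.mpr
        refine ⟨⟨α ^ m, m, rfl⟩, ?_⟩
        show (α ^ m : R) • (α ^ k : R) • q = (α ^ m : R) • ((s : R)) • q'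
        have ht : (α ^ m * α ^ k) • t = 0 := by rw [mul_comm, mul_smul, hm, smul_zero]
        rw [← hs]
        simp only [hq, smul_add, smul_smul]
        rw [ht, add_zero]
        congr 1
        ring
      obtain ⟨q'', hq''⟩ := ih q' (⟨α ^ k, k, rfl⟩ : Submonoid.powers α) rfl
      exact ⟨q'', by rw [hq'', ← step]⟩
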